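/- Let a, b ∈ ℂ with |a|² + |b|² = 1 and let U be the qubit unitary U = [[a, b], [−conj(b), conj(a)]]. Then the value 2|a||b| is the greatest element of the set { C_{l1}(ρ) − C_{l1}(U ρ U†) : ρ a qubit density matrix }. Consequently, for qubit unitaries the generalized de-cohering power, the generalized cohering power, and the cohering power in the l1-coherence all coincide and equal 2|a||b|, and each is at least the de-cohering power 1 − ||a|² − |b|²|. -/

import Mathlib

open Matrix BigOperators ComplexOrder

/-- The l1-coherence of a matrix: the sum of the absolute values of its
off-diagonal entries. -/
noncomputable def Cl1 {n : ℕ} (A : Matrix (Fin n) (Fin n) ℂ) : ℝ :=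
  ∑ i, ∑ j, if i ≠ j then ‖A i j‖ else 0

/-- A density matrix: positive semidefinite with trace 1. -/
def IsDensity {n : ℕ} (ρ : Matrix (Fin n) (Fin n) ℂ) : Prop :=
  ρ.PosSemidef ∧ ρ.trace = 1

/-- A quantum operation (CPTP map) given by a finite family of Kraus operators. -/
def IsQuantumOp {n : ℕ} (Φ : Matrix (Fin n) (Fin n) ℂ → Matrix (Fin n) (Fin n) ℂ) : Prop :=
  ∃ (m : ℕ) (K : Fin m → Matrix (Fin n) (Fin n) ℂ),
    (∑ i, (K i)ᴴ * K i) = 1 ∧ ∀ ρ, Φ ρ = ∑ i, K i * ρ * (K i)ᴴ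

/-- The dephasing map `Δ`, keeping only the diagonal part of a matrix. -/
def Deph {n : ℕ} (A : Matrix (Fin n) (Fin n) ℂ) : Matrix (Fin n) (Fin n) ℂ :=
  Matrix.of fun i j => if i = j then A i j else 0

/-- The maximally coherent qubit state vector `(1/√2)(1, e^{iθ})`. -/
noncomputable def psi (θ : ℝ) : Fin 2 → ℂ :=
  ![1 / (Real.sqrt 2 : ℂ), Complex.exp (θ * Complex.I) / (Real.sqrt 2 : ℂ)]

/-- The outer product `w w†` of a vector with itself. -/
def outer {n : ℕ} (w : Fin n → ℂ) : Matrix (Fin n) (Fin n) ℂ :=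
  Matrix.vecMulVec w (star w)

/-- The qubit unitary `[[a, b], [-conj b, conj a]]`. -/
def Uab (a b : ℂ) : Matrix (Fin 2) (Fin 2) ℂ :=
  !![a, b; -(starRingEnd ℂ) b, (starRingEnd ℂ) a]

/-- The binary entropy (base 2), with the convention `0 · log 0 = 0`. -/
noncomputable def H (x : ℝ) : ℝ :=
  -(x * Real.logb 2 x) - (1 - x) * Real.logb 2 (1 - x)


/-! Write `σ = U ρ U†` and split it into its off-diagonal part and its diagonal `Δ σ`, so that
`ρ = U† (σ - Δ σ) U + U† (Δ σ) U`. For a `2 × 2` Hermitian matrix with zero diagonal, `Cl1` is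
`√2` times the Frobenius norm, which is unitarily invariant and bounds `Cl1 / √2` of any `2 × 2`
matrix; so the first term has `Cl1` at most `Cl1 σ`. The second term is
`σ₁₁ • 1 + (σ₀₀ - σ₁₁) • U† E₀₀ U`, whose `Cl1` is at most `Cl1 (U† E₀₀ U) = 2 |a| |b|`.
Hence `Cl1 ρ - Cl1 (U ρ U†) ≤ 2 |a| |b|`, with equality at `ρ = U† E₀₀ U`, and the reverse
difference is the same bound for `U†`. On the Bloch ball this is the triangle inequality for the
distance to the `z`-axis, which `U` rotates by an angle of sine `2 |a| |b|`. -/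

section Coherence

variable {n : ℕ}

lemma Cl1_nonneg (A : Matrix (Fin n) (Fin n) ℂ) : 0 ≤ Cl1 A :=
  Finset.sum_nonneg fun _ _ => Finset.sum_nonneg fun _ _ => by split_ifs <;> simp

lemma Cl1_congr_offDiag {A B : Matrix (Fin n) (Fin n) ℂ}
    (h : ∀ i j, i ≠ j → A i j = B i j) : Cl1 A = Cl1 B :=
  Finset.sum_congr rfl fun i _ => Finset.sum_congr rfl fun j _ => by
    split_ifs with hij
    · rw [h i j hij]
    · rfl

lemma Cl1_add_le (A B : Matrix (Fin n) (Fin n) ℂ) : Cl1 (A + B) ≤ Cl1 A + Cl1 B := by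
  simp only [Cl1, ← Finset.sum_add_distrib]
  gcongr with i _ j _
  split_ifs
  · exact norm_add_le _ _
  · simp

lemma Cl1_smul (c : ℂ) (A : Matrix (Fin n) (Fin n) ℂ) : Cl1 (c • A) = ‖c‖ * Cl1 A := by
  simp only [Cl1, Finset.mul_sum, Matrix.smul_apply, norm_smul, mul_ite, mul_zero]

lemma Cl1_smul_one_add (c : ℂ) (A : Matrix (Fin n) (Fin n) ℂ) : Cl1 (c • 1 + A) = Cl1 A :=
  Cl1_congr_offDiag fun i j hij => by simp [one_apply_ne hij]

lemma Cl1_fin_two (A : Matrix (Fin 2) (Fin 2) ℂ) : Cl1 A = ‖A 0 1‖ + ‖A 1 0‖ := by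
  simp [Cl1, Fin.sum_univ_two]

lemma IsDensity.conj_unitary {V ρ : Matrix (Fin n) (Fin n) ℂ} (hV : V ∈ unitaryGroup (Fin n) ℂ)
    (hρ : IsDensity ρ) : IsDensity (V * ρ * Vᴴ) :=
  ⟨hρ.1.mul_mul_conjTranspose_same V, by
    rw [trace_mul_cycle, ← star_eq_conjTranspose, mem_unitaryGroup_iff'.mp hV, Matrix.one_mul,
      hρ.2]⟩

lemma isDensity_single (i : Fin n) : IsDensity (single i i (1 : ℂ)) :=
  ⟨diagonal_single i (1 : ℂ) ▸ .diagonal (Pi.single_nonneg.2 zero_le_one), by simp⟩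

end Coherence

section Frobenius

variable {m : Type*} [Fintype m]

lemma sum_norm_sq_eq_re_trace (M : Matrix m m ℂ) :
    ∑ i, ∑ j, ‖M i j‖ ^ 2 = (Mᴴ * M).trace.re := by
  rw [Finset.sum_comm]
  simp [trace, mul_apply, Complex.re_sum, ← Complex.normSq_eq_norm_sq, Complex.normSq_apply]

variable [DecidableEq m]

lemma sum_norm_sq_conj_unitary {V : Matrix m m ℂ} (hV : V ∈ unitaryGroup m ℂ)
    (M : Matrix m m ℂ) :
    ∑ i, ∑ j, ‖(Vᴴ * M * V) i j‖ ^ 2 = ∑ i, ∑ j, ‖M i j‖ ^ 2 := by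
  have hVV : V * Vᴴ = 1 := mem_unitaryGroup_iff.mp hV
  rw [sum_norm_sq_eq_re_trace, sum_norm_sq_eq_re_trace]
  congr 1
  simp only [conjTranspose_mul, conjTranspose_conjTranspose]
  calc (Vᴴ * (Mᴴ * V) * (Vᴴ * M * V)).trace = (Vᴴ * (Mᴴ * (V * Vᴴ) * M) * V).trace := by
        simp only [Matrix.mul_assoc]
    _ = (Mᴴ * M).trace := by rw [hVV, Matrix.mul_one, trace_mul_cycle, hVV, Matrix.one_mul]

lemma conjTranspose_mul_conj_mul {V : Matrix m m ℂ} (hV : V ∈ unitaryGroup m ℂ)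
    (X : Matrix m m ℂ) : Vᴴ * (V * X * Vᴴ) * V = X := by
  have hVV : Vᴴ * V = 1 := mem_unitaryGroup_iff'.mp hV
  simp only [← Matrix.mul_assoc, hVV, Matrix.one_mul]
  rw [Matrix.mul_assoc, hVV, Matrix.mul_one]

end Frobenius

section Qubit

lemma Cl1_sq_le_two_mul_sum_norm_sq (A : Matrix (Fin 2) (Fin 2) ℂ) :
    Cl1 A ^ 2 ≤ 2 * ∑ i, ∑ j, ‖A i j‖ ^ 2 := by
  simp only [Cl1_fin_two, Fin.sum_univ_two]
  nlinarith [sq_nonneg (‖A 0 1‖ - ‖A 1 0‖), sq_nonneg ‖A 0 0‖, sq_nonneg ‖A 1 1‖]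

lemma Cl1_sq_eq_two_mul_sum_norm_sq_sub_deph {σ : Matrix (Fin 2) (Fin 2) ℂ}
    (hσ : σ.IsHermitian) : Cl1 σ ^ 2 = 2 * ∑ i, ∑ j, ‖(σ - Deph σ) i j‖ ^ 2 := by
  have h10 : ‖σ 1 0‖ = ‖σ 0 1‖ := by rw [← hσ.apply 0 1, norm_star]
  simp [Cl1_fin_two, Fin.sum_univ_two, Deph, h10]
  ring

lemma Cl1_conj_unitary_sub_deph_le {V σ : Matrix (Fin 2) (Fin 2) ℂ}
    (hV : V ∈ unitaryGroup (Fin 2) ℂ) (hσ : σ.IsHermitian) :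
    Cl1 (Vᴴ * (σ - Deph σ) * V) ≤ Cl1 σ := by
  refine le_of_pow_le_pow_left₀ two_ne_zero (Cl1_nonneg σ) ?_
  calc Cl1 (Vᴴ * (σ - Deph σ) * V) ^ 2
      ≤ 2 * ∑ i, ∑ j, ‖(Vᴴ * (σ - Deph σ) * V) i j‖ ^ 2 := Cl1_sq_le_two_mul_sum_norm_sq _
    _ = 2 * ∑ i, ∑ j, ‖(σ - Deph σ) i j‖ ^ 2 := by rw [sum_norm_sq_conj_unitary hV]
    _ = Cl1 σ ^ 2 := (Cl1_sq_eq_two_mul_sum_norm_sq_sub_deph hσ).symm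

lemma deph_fin_two (σ : Matrix (Fin 2) (Fin 2) ℂ) :
    Deph σ = σ 1 1 • 1 + (σ 0 0 - σ 1 1) • single 0 0 1 := by
  ext i j
  fin_cases i <;> fin_cases j <;> simp [Deph]

lemma norm_sub_le_one_of_nonneg_of_add_eq_one {z w : ℂ} (hz : 0 ≤ z) (hw : 0 ≤ w)
    (h : z + w = 1) : ‖z - w‖ ≤ 1 := by
  obtain ⟨hz0, hzi⟩ := Complex.nonneg_iff.mp hz
  obtain ⟨hw0, hwi⟩ := Complex.nonneg_iff.mp hw
  have hre : z.re + w.re = 1 := by simpa using congrArg Complex.re h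
  rw [← (Complex.abs_re_eq_norm).mpr (by simp [← hzi, ← hwi]), Complex.sub_re, abs_le]
  constructor <;> linarith

lemma Cl1_conj_deph_le {V σ : Matrix (Fin 2) (Fin 2) ℂ} (hV : V ∈ unitaryGroup (Fin 2) ℂ)
    (hσ : IsDensity σ) : Cl1 (Vᴴ * Deph σ * V) ≤ Cl1 (Vᴴ * single 0 0 1 * V) := by
  have hVV : Vᴴ * V = 1 := mem_unitaryGroup_iff'.mp hV
  have htr : σ 0 0 + σ 1 1 = 1 := by simpa [trace, Fin.sum_univ_two] using hσ.2
  calc Cl1 (Vᴴ * Deph σ * V)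
      = Cl1 (σ 1 1 • 1 + (σ 0 0 - σ 1 1) • (Vᴴ * single 0 0 1 * V)) := by
        rw [deph_fin_two, Matrix.mul_add, Matrix.add_mul, Matrix.mul_smul, Matrix.smul_mul,
          Matrix.mul_one, hVV, Matrix.mul_smul, Matrix.smul_mul]
    _ = ‖σ 0 0 - σ 1 1‖ * Cl1 (Vᴴ * single 0 0 1 * V) := by rw [Cl1_smul_one_add, Cl1_smul]
    _ ≤ Cl1 (Vᴴ * single 0 0 1 * V) :=
        mul_le_of_le_one_left (Cl1_nonneg _)
          (norm_sub_le_one_of_nonneg_of_add_eq_one hσ.1.diag_nonneg hσ.1.diag_nonneg htr)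

theorem Cl1_le_Cl1_conj_add {V ρ : Matrix (Fin 2) (Fin 2) ℂ} (hV : V ∈ unitaryGroup (Fin 2) ℂ)
    (hρ : IsDensity ρ) : Cl1 ρ ≤ Cl1 (V * ρ * Vᴴ) + Cl1 (Vᴴ * single 0 0 1 * V) := by
  set σ := V * ρ * Vᴴ
  have hσ : IsDensity σ := hρ.conj_unitary hV
  calc Cl1 ρ = Cl1 (Vᴴ * (σ - Deph σ) * V + Vᴴ * Deph σ * V) := by
        rw [← Matrix.add_mul, ← Matrix.mul_add, sub_add_cancel, conjTranspose_mul_conj_mul hV]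
    _ ≤ Cl1 (Vᴴ * (σ - Deph σ) * V) + Cl1 (Vᴴ * Deph σ * V) := Cl1_add_le _ _
    _ ≤ Cl1 σ + Cl1 (Vᴴ * single 0 0 1 * V) :=
        add_le_add (Cl1_conj_unitary_sub_deph_le hV hσ.1.1) (Cl1_conj_deph_le hV hσ)

end Qubit

section Uab

lemma Uab_mem_unitaryGroup {a b : ℂ} (hab : ‖a‖ ^ 2 + ‖b‖ ^ 2 = 1) :
    Uab a b ∈ unitaryGroup (Fin 2) ℂ := by
  have h : a * starRingEnd ℂ a + b * starRingEnd ℂ b = 1 := by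
    simp only [Complex.mul_conj, Complex.normSq_eq_norm_sq]
    exact_mod_cast hab
  rw [mem_unitaryGroup_iff]
  ext i j
  fin_cases i <;> fin_cases j <;> simp [Uab, mul_apply, Fin.sum_univ_two] <;> grind

lemma conjTranspose_Uab (a b : ℂ) : (Uab a b)ᴴ = Uab (starRingEnd ℂ a) (-b) := by
  ext i j
  fin_cases i <;> fin_cases j <;> simp [Uab]

lemma Cl1_Uab_mul_single_mul_conjTranspose (a b : ℂ) (i : Fin 2) :
    Cl1 (Uab a b * single i i 1 * (Uab a b)ᴴ) = 2 * ‖a‖ * ‖b‖ := by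
  rw [Cl1_fin_two]
  fin_cases i <;> simp [Uab, mul_apply, Fin.sum_univ_two, vecMul, dotProduct, single_apply] <;> ring

end Uab

lemma one_sub_abs_sq_sub_sq_le {x y : ℝ} (hx : 0 ≤ x) (hy : 0 ≤ y) (h : x ^ 2 + y ^ 2 = 1) :
    1 - |x ^ 2 - y ^ 2| ≤ 2 * x * y := by
  have hxy : |x - y| ≤ x + y := abs_le.mpr ⟨by linarith, by linarith⟩
  have : (x - y) ^ 2 ≤ |x ^ 2 - y ^ 2| := by
    rw [show x ^ 2 - y ^ 2 = (x - y) * (x + y) by ring, abs_mul, abs_of_nonneg (add_nonneg hx hy),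
      ← sq_abs, sq]
    exact mul_le_mul_of_nonneg_left hxy (abs_nonneg _)
  nlinarith

theorem generalized_decohering_power_l1_qubit_unitary
    (a b : ℂ) (hab : ‖a‖ ^ 2 + ‖b‖ ^ 2 = 1) :
    IsGreatest
      {x : ℝ | ∃ ρ : Matrix (Fin 2) (Fin 2) ℂ, IsDensity ρ ∧
        x = Cl1 ρ - Cl1 (Uab a b * ρ * (Uab a b)ᴴ)}
      (2 * ‖a‖ * ‖b‖) ∧
    IsGreatest
      {x : ℝ | ∃ ρ : Matrix (Fin 2) (Fin 2) ℂ, IsDensity ρ ∧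
        x = Cl1 (Uab a b * ρ * (Uab a b)ᴴ) - Cl1 ρ}
      (2 * ‖a‖ * ‖b‖) ∧
    max (Cl1 (Uab a b * Matrix.single (0 : Fin 2) 0 (1 : ℂ) * (Uab a b)ᴴ))
        (Cl1 (Uab a b * Matrix.single (1 : Fin 2) 1 (1 : ℂ) * (Uab a b)ᴴ)) =
      2 * ‖a‖ * ‖b‖ ∧
    1 - |‖a‖ ^ 2 - ‖b‖ ^ 2| ≤
      2 * ‖a‖ * ‖b‖ := by
  have hU := Uab_mem_unitaryGroup hab
  have hU' : (Uab a b)ᴴ ∈ unitaryGroup (Fin 2) ℂ := Unitary.star_mem hU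
  have hcoh := Cl1_Uab_mul_single_mul_conjTranspose a b
  have hcoh' : Cl1 ((Uab a b)ᴴ * single 0 0 1 * Uab a b) = 2 * ‖a‖ * ‖b‖ := by
    simpa [conjTranspose_Uab] using Cl1_Uab_mul_single_mul_conjTranspose (starRingEnd ℂ a) (-b) 0
  have hE : Cl1 (single (0 : Fin 2) 0 (1 : ℂ)) = 0 := by simp [Cl1_fin_two]
  refine ⟨⟨⟨(Uab a b)ᴴ * single 0 0 1 * Uab a b, ?_, ?_⟩, ?_⟩,
    ⟨⟨single 0 0 1, isDensity_single 0, by rw [hcoh, hE, sub_zero]⟩, ?_⟩,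
    by rw [hcoh, hcoh, max_self], one_sub_abs_sq_sub_sq_le (norm_nonneg a) (norm_nonneg b) hab⟩
  · simpa using (isDensity_single 0).conj_unitary hU'
  · have h := conjTranspose_mul_conj_mul hU' (single 0 0 1)
    rw [conjTranspose_conjTranspose] at h
    rw [h, hcoh', hE, sub_zero]
  · rintro _ ⟨ρ, hρ, rfl⟩
    linarith [Cl1_le_Cl1_conj_add hU hρ]
  · rintro _ ⟨ρ, hρ, rfl⟩
    have h := Cl1_le_Cl1_conj_add hU' (hρ.conj_unitary hU)
    rw [conjTranspose_conjTranspose, conjTranspose_mul_conj_mul hU, hcoh 0] at h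
    linarith
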